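/- arXiv:1301.1336 — 3 statements merged into one kernel-verified Lean document; each statement's English description precedes it below -/
import Mathlib

section
/- Let x_1, ..., x_s be pairwise distinct complex numbers, d_1, ..., d_s positive integers with Σ d_j = r, and a_{j,ℓ} complex numbers (0 ≤ ℓ ≤ d_j - 1) with a_{j,d_j-1} ≠ 0 for all j. Define m_k = Σ_{j=1}^{s} Σ_{ℓ=0}^{d_j-1} a_{j,ℓ} · k!/(k-ℓ)! · x_j^{k-ℓ} for k = 0, ..., 2r-1 (with the convention k!/(k-ℓ)! = 0 for ℓ > k). Then the r × r Hankel matrix M_r with entries m_{i+j}, 0 ≤ i,j ≤ r-1, is nonsingular. -/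
open Finset Matrix Polynomial


lemma descFactorial_vandermonde' (i k ℓ : ℕ) :
    (i + k).descFactorial ℓ =
      ∑ p ∈ range (ℓ + 1), ℓ.choose p * i.descFactorial p * k.descFactorial (ℓ - p) := by
  have h := Nat.add_choose_eq i k ℓ
  rw [Finset.Nat.sum_antidiagonal_eq_sum_range_succ (fun a b => i.choose a * k.choose b)] at h
  rw [Nat.descFactorial_eq_factorial_mul_choose, h, Finset.mul_sum]
  refine Finset.sum_congr rfl fun p hp => ?_
  rw [Finset.mem_range, Nat.lt_succ_iff] at hp
  rw [Nat.descFactorial_eq_factorial_mul_choose, Nat.descFactorial_eq_factorial_mul_choose]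
  have h2 : ℓ.choose p * Nat.factorial p * Nat.factorial (ℓ - p) = Nat.factorial ℓ :=
    Nat.choose_mul_factorial_mul_factorial hp
  calc Nat.factorial ℓ * (i.choose p * k.choose (ℓ - p))
      = (ℓ.choose p * Nat.factorial p * Nat.factorial (ℓ - p)) *
        (i.choose p * k.choose (ℓ - p)) := by rw [h2]
    _ = ℓ.choose p * (Nat.factorial p * i.choose p) *
        (Nat.factorial (ℓ - p) * k.choose (ℓ - p)) := by ring

lemma key_identity' (i k ℓ : ℕ) (z : ℂ) :
    ((i + k).descFactorial ℓ : ℂ) * z ^ (i + k - ℓ) =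
      ∑ p ∈ range (ℓ + 1), (ℓ.choose p : ℂ) * (i.descFactorial p : ℂ) * z ^ (i - p) *
        ((k.descFactorial (ℓ - p) : ℂ) * z ^ (k - (ℓ - p))) := by
  have h : ∀ p ∈ range (ℓ + 1),
      (ℓ.choose p : ℂ) * (i.descFactorial p : ℂ) * z ^ (i - p) *
        ((k.descFactorial (ℓ - p) : ℂ) * z ^ (k - (ℓ - p)))
      = ((ℓ.choose p * i.descFactorial p * k.descFactorial (ℓ - p) : ℕ) : ℂ) * z ^ (i + k - ℓ) := by
    intro p hp
    rw [Finset.mem_range, Nat.lt_succ_iff] at hp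
    by_cases hpi : p ≤ i
    · by_cases hq : ℓ - p ≤ k
      · have he : z ^ (i - p) * z ^ (k - (ℓ - p)) = z ^ (i + k - ℓ) := by
          rw [← pow_add]; congr 1; omega
        push_cast
        calc (ℓ.choose p : ℂ) * (i.descFactorial p : ℂ) * z ^ (i - p) *
              ((k.descFactorial (ℓ - p) : ℂ) * z ^ (k - (ℓ - p)))
            = (ℓ.choose p : ℂ) * (i.descFactorial p : ℂ) * (k.descFactorial (ℓ - p) : ℂ) *
              (z ^ (i - p) * z ^ (k - (ℓ - p))) := by ring
          _ = _ := by rw [he]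
      · have h0 : k.descFactorial (ℓ - p) = 0 := Nat.descFactorial_eq_zero_iff_lt.2 (by omega)
        rw [h0]; push_cast; ring
    · have h0 : i.descFactorial p = 0 := Nat.descFactorial_eq_zero_iff_lt.2 (by omega)
      rw [h0]; push_cast; ring
  rw [Finset.sum_congr rfl h, ← Finset.sum_mul, ← Nat.cast_sum, ← descFactorial_vandermonde']


lemma iterate_derivative_finset_sum' {α : Type*} (t : Finset α) (f : α → ℂ[X]) (p : ℕ) :
    derivative^[p] (∑ i ∈ t, f i) = ∑ i ∈ t, derivative^[p] (f i) := by
  induction p with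
  | zero => simp
  | succ n ih => simp [Function.iterate_succ_apply', ih, derivative_sum]

lemma vandermonde_kernel' {s r : ℕ} (x : Fin s → ℂ) (hx : Function.Injective x)
    (dv : Fin s → ℕ) (hdv : ∀ j, 1 ≤ dv j) (hsum : ∑ j, dv j = r) (v : Fin r → ℂ)
    (hv : ∀ (j : Fin s) (p : ℕ), p < dv j →
      ∑ i : Fin r, v i * (Nat.descFactorial i p : ℂ) * x j ^ ((i : ℕ) - p) = 0) :
    v = 0 := by
  by_contra hne
  obtain ⟨i0, hi0⟩ := Function.ne_iff.1 hne
  set P : ℂ[X] := ∑ i : Fin r, C (v i) * X ^ (i : ℕ) with hP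
  have hcoeff : ∀ n : Fin r, P.coeff n = v n := by
    intro n
    rw [hP, finset_sum_coeff]
    rw [Finset.sum_eq_single n]
    · simp
    · intro i _ hne'
      have : (n : ℕ) ≠ (i : ℕ) := fun h => hne' (Fin.ext h.symm)
      rw [coeff_C_mul, coeff_X_pow, if_neg this, mul_zero]
    · simp
  have hP0 : P ≠ 0 := fun h => hi0 (by rw [← hcoeff i0, h, Polynomial.coeff_zero]; rfl)
  have heval : ∀ (j : Fin s) (p : ℕ), p < dv j → (derivative^[p] P).IsRoot (x j) := by
    intro j p hp
    have hD : derivative^[p] P =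
        ∑ i : Fin r, C (v i) * (C ((Nat.descFactorial i p : ℕ) : ℂ) * X ^ ((i : ℕ) - p)) := by
      rw [hP, iterate_derivative_finset_sum']
      refine Finset.sum_congr rfl fun i _ => ?_
      rw [iterate_derivative_C_mul, iterate_derivative_X_pow_eq_C_mul]
    unfold Polynomial.IsRoot
    rw [hD, eval_finset_sum]
    simpa [mul_assoc] using hv j p hp
  have hmult : ∀ j : Fin s, dv j ≤ P.rootMultiplicity (x j) := by
    intro j
    have h1 : dv j - 1 < P.rootMultiplicity (x j) := by
      apply Polynomial.lt_rootMultiplicity_of_isRoot_iterate_derivative_of_mem_nonZeroDivisors hP0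
      · intro mm hmm
        have := hdv j
        exact heval j mm (by omega)
      · exact mem_nonZeroDivisors_of_ne_zero
          (Nat.cast_ne_zero.2 (Nat.factorial_ne_zero _))
    have := hdv j
    omega
  have hr0 : 0 < r := i0.pos
  have hdeg : P.natDegree ≤ r - 1 := by
    apply Polynomial.natDegree_sum_le_of_forall_le
    intro i _
    refine le_trans (Polynomial.natDegree_C_mul_le _ _) ?_
    rw [Polynomial.natDegree_X_pow]
    omega
  have hcount : ∑ j : Fin s, P.roots.count (x j) ≤ Multiset.card P.roots := by
    have himg : ∑ t ∈ Finset.image x Finset.univ, P.roots.count t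
        = ∑ j : Fin s, P.roots.count (x j) :=
      Finset.sum_image (fun a _ b _ h => hx h)
    rw [← himg]
    have hsub : Finset.image x Finset.univ ∪ P.roots.toFinset ⊇ P.roots.toFinset :=
      Finset.subset_union_right
    have h1 : ∑ t ∈ Finset.image x Finset.univ, P.roots.count t ≤
        ∑ t ∈ Finset.image x Finset.univ ∪ P.roots.toFinset, P.roots.count t :=
      Finset.sum_le_sum_of_subset Finset.subset_union_left
    have h2 : ∑ t ∈ Finset.image x Finset.univ ∪ P.roots.toFinset, P.roots.count t =
        ∑ t ∈ P.roots.toFinset, P.roots.count t := by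
      refine (Finset.sum_subset hsub fun t _ ht => Multiset.count_eq_zero.2 ?_).symm
      simpa using ht
    rw [Multiset.toFinset_sum_count_eq] at h2
    omega
  have hfinal : r ≤ Multiset.card P.roots := by
    calc r = ∑ j, dv j := hsum.symm
      _ ≤ ∑ j : Fin s, P.rootMultiplicity (x j) := Finset.sum_le_sum fun j _ => hmult j
      _ = ∑ j : Fin s, P.roots.count (x j) := by
          simp [Polynomial.count_roots]
      _ ≤ Multiset.card P.roots := hcount
  have := Polynomial.card_roots' P
  omega

lemma block_sum' (d : ℕ) (c : ℕ → ℂ) (z : ℂ) (i k : ℕ) :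
    ∑ q ∈ range d, ∑ p ∈ range d,
        ((i.descFactorial p : ℂ) * z ^ (i - p)) *
          (if p + q < d then (((p + q).choose p : ℕ) : ℂ) * c (p + q) else 0) *
          ((k.descFactorial q : ℂ) * z ^ (k - q))
      = ∑ ℓ ∈ range d, c ℓ * ((i + k).descFactorial ℓ : ℂ) * z ^ (i + k - ℓ) := by
  have hrhs : ∀ ℓ ∈ range d,
      c ℓ * ((i + k).descFactorial ℓ : ℂ) * z ^ (i + k - ℓ)
      = ∑ p ∈ range d, ((i.descFactorial p : ℂ) * z ^ (i - p)) *
          ((ℓ.choose p : ℂ) * c ℓ) *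
          ((k.descFactorial (ℓ - p) : ℂ) * z ^ (k - (ℓ - p))) := by
    intro ℓ hℓ
    rw [Finset.mem_range] at hℓ
    rw [mul_assoc, key_identity' i k ℓ z, Finset.mul_sum]
    rw [Finset.sum_subset (Finset.range_subset_range.2 (by omega : ℓ + 1 ≤ d))]
    · exact Finset.sum_congr rfl fun p _ => by ring
    · intro p _ hp
      rw [Finset.mem_range, Nat.lt_succ_iff, not_le] at hp
      rw [Nat.choose_eq_zero_of_lt hp]
      push_cast; ring
  have perp : ∀ p ∈ range d,
      (∑ q ∈ range d,
        ((i.descFactorial p : ℂ) * z ^ (i - p)) *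
          (if p + q < d then (((p + q).choose p : ℕ) : ℂ) * c (p + q) else 0) *
          ((k.descFactorial q : ℂ) * z ^ (k - q)))
      = ∑ ℓ ∈ range d, ((i.descFactorial p : ℂ) * z ^ (i - p)) *
          ((ℓ.choose p : ℂ) * c ℓ) *
          ((k.descFactorial (ℓ - p) : ℂ) * z ^ (k - (ℓ - p))) := by
    intro p hp
    rw [Finset.mem_range] at hp
    have hL : (∑ q ∈ range d,
        ((i.descFactorial p : ℂ) * z ^ (i - p)) *
          (if p + q < d then (((p + q).choose p : ℕ) : ℂ) * c (p + q) else 0) *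
          ((k.descFactorial q : ℂ) * z ^ (k - q)))
        = ∑ q ∈ range (d - p),
          ((i.descFactorial p : ℂ) * z ^ (i - p)) *
            ((((p + q).choose p : ℕ) : ℂ) * c (p + q)) *
            ((k.descFactorial q : ℂ) * z ^ (k - q)) := by
      rw [← Finset.sum_subset (Finset.range_subset_range.2 (by omega : d - p ≤ d))]
      · refine Finset.sum_congr rfl fun q hq => ?_
        rw [Finset.mem_range] at hq
        rw [if_pos (by omega)]
      · intro q _ hq
        rw [Finset.mem_range, not_lt] at hq
        rw [if_neg (by omega), mul_zero, zero_mul]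
    have hsub : Finset.Ico p d ⊆ range d := by
      rw [Finset.range_eq_Ico]
      exact Finset.Ico_subset_Ico (Nat.zero_le p) le_rfl
    have hR : (∑ ℓ ∈ range d, ((i.descFactorial p : ℂ) * z ^ (i - p)) *
          ((ℓ.choose p : ℂ) * c ℓ) *
          ((k.descFactorial (ℓ - p) : ℂ) * z ^ (k - (ℓ - p))))
        = ∑ ℓ ∈ Finset.Ico p d, ((i.descFactorial p : ℂ) * z ^ (i - p)) *
          ((ℓ.choose p : ℂ) * c ℓ) *
          ((k.descFactorial (ℓ - p) : ℂ) * z ^ (k - (ℓ - p))) := by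
      refine (Finset.sum_subset hsub ?_).symm
      intro ℓ hℓ hℓ'
      rw [Finset.mem_range] at hℓ
      rw [Finset.mem_Ico] at hℓ'
      have : ℓ < p := by omega
      rw [Nat.choose_eq_zero_of_lt this]
      push_cast; ring
    rw [hL, hR, Finset.sum_Ico_eq_sum_range]
    refine Finset.sum_congr rfl fun q hq => ?_
    have hpq : p + q - p = q := by omega
    rw [hpq]
  calc ∑ q ∈ range d, ∑ p ∈ range d,
        ((i.descFactorial p : ℂ) * z ^ (i - p)) *
          (if p + q < d then (((p + q).choose p : ℕ) : ℂ) * c (p + q) else 0) *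
          ((k.descFactorial q : ℂ) * z ^ (k - q))
      = ∑ p ∈ range d, ∑ q ∈ range d,
        ((i.descFactorial p : ℂ) * z ^ (i - p)) *
          (if p + q < d then (((p + q).choose p : ℕ) : ℂ) * c (p + q) else 0) *
          ((k.descFactorial q : ℂ) * z ^ (k - q)) := Finset.sum_comm
    _ = ∑ p ∈ range d, ∑ ℓ ∈ range d, ((i.descFactorial p : ℂ) * z ^ (i - p)) *
          ((ℓ.choose p : ℂ) * c ℓ) *
          ((k.descFactorial (ℓ - p) : ℂ) * z ^ (k - (ℓ - p))) :=
        Finset.sum_congr rfl perp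
    _ = ∑ ℓ ∈ range d, ∑ p ∈ range d, ((i.descFactorial p : ℂ) * z ^ (i - p)) *
          ((ℓ.choose p : ℂ) * c ℓ) *
          ((k.descFactorial (ℓ - p) : ℂ) * z ^ (k - (ℓ - p))) := Finset.sum_comm
    _ = ∑ ℓ ∈ range d, c ℓ * ((i + k).descFactorial ℓ : ℂ) * z ^ (i + k - ℓ) :=
        (Finset.sum_congr rfl hrhs).symm

lemma A_kernel' {s : ℕ} (dv : Fin s → ℕ) (hdv : ∀ j, 1 ≤ dv j) (a : Fin s → ℕ → ℂ)
    (ha : ∀ j, a j (dv j - 1) ≠ 0)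
    (w : (Σ j : Fin s, Fin (dv j)) → ℂ)
    (hw : ∀ κ : Σ j : Fin s, Fin (dv j),
      ∑ μ : Σ j : Fin s, Fin (dv j),
        (if h : κ.1 = μ.1 ∧ (κ.2 : ℕ) + (μ.2 : ℕ) < dv κ.1 then
          ((((κ.2 : ℕ) + (μ.2 : ℕ)).choose (κ.2 : ℕ) : ℕ) : ℂ) *
            a κ.1 ((κ.2 : ℕ) + (μ.2 : ℕ)) else 0) * w μ = 0) :
    w = 0 := by
  have key : ∀ (n : ℕ) (j : Fin s) (q : Fin (dv j)), (q : ℕ) = n → w ⟨j, q⟩ = 0 := by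
    intro n
    induction n using Nat.strong_induction_on with
    | _ n ih =>
      intro j q hq
      have hqd : n < dv j := hq ▸ q.isLt
      set p : Fin (dv j) := ⟨dv j - 1 - n, by omega⟩ with hpdef
      have h := hw ⟨j, p⟩
      rw [Finset.sum_eq_single (⟨j, q⟩ : Σ j : Fin s, Fin (dv j))] at h
      · -- h : coefficient * w ⟨j,q⟩ = 0
        have hcond : (⟨j, p⟩ : Σ j : Fin s, Fin (dv j)).1 = (⟨j, q⟩ : Σ j : Fin s, Fin (dv j)).1 ∧
            ((p : ℕ) + (q : ℕ) < dv j) := ⟨rfl, by simp only [hpdef]; omega⟩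
        rw [dif_pos hcond] at h
        have hsum : (p : ℕ) + (q : ℕ) = dv j - 1 := by simp only [hpdef]; omega
        rw [hsum] at h
        have hch : (((dv j - 1).choose (p : ℕ) : ℕ) : ℂ) ≠ 0 := by
          rw [Nat.cast_ne_zero]
          exact (Nat.choose_pos (by omega : (p : ℕ) ≤ dv j - 1)).ne'
        rcases mul_eq_zero.1 h with h0 | h0
        · exact absurd h0 (mul_ne_zero hch (ha j))
        · exact h0
      · rintro ⟨j', q'⟩ _ hne
        by_cases hjj : (j : Fin s) = j'
        · subst hjj
          by_cases hlt : (p : ℕ) + (q' : ℕ) < dv j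
          · have hq' : (q' : ℕ) < n := by
              have : q' ≠ q := fun h' => hne (by rw [h'])
              have : (q' : ℕ) ≠ (q : ℕ) := fun h' => this (Fin.ext h')
              simp only [hpdef] at hlt
              omega
            rw [ih (q' : ℕ) hq' j q' rfl, mul_zero]
          · rw [dif_neg (by simp [hlt]), zero_mul]
        · rw [dif_neg (by simp [hjj]), zero_mul]
      · intro hmem
        exact absurd (Finset.mem_univ _) hmem
  funext κ
  obtain ⟨j, q⟩ := κ
  exact key (q : ℕ) j q rfl


/-- For confluent Prony moments `m_k = Σ_j Σ_{ℓ<d_j} a_{j,ℓ} k!/(k-ℓ)! x_j^{k-ℓ}`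
with pairwise distinct nodes `x_j`, multiplicities `d_j ≥ 1` summing to `r`, and
top coefficients `a_{j,d_j-1} ≠ 0`, the `r × r` Hankel matrix `(m_{i+j})` is
nonsingular. -/
theorem confluent_prony_hankel_nonsingular (s r : ℕ) (x : Fin s → ℂ)
    (hx : Function.Injective x) (dv : Fin s → ℕ) (hdv : ∀ j, 1 ≤ dv j)
    (hsum : ∑ j, dv j = r) (a : Fin s → ℕ → ℂ)
    (ha : ∀ j, a j (dv j - 1) ≠ 0) (m : ℕ → ℂ)
    (hm : ∀ k, m k = ∑ j, ∑ ℓ ∈ Finset.range (dv j),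
      a j ℓ * (Nat.descFactorial k ℓ : ℂ) * x j ^ (k - ℓ)) :
    (Matrix.of fun (i j : Fin r) => m ((i : ℕ) + (j : ℕ))).det ≠ 0 := by
  have hcard : Fintype.card (Σ j : Fin s, Fin (dv j)) = r := by
    simp only [Fintype.card_sigma, Fintype.card_fin]; exact hsum
  let e : Fin r ≃ (Σ j : Fin s, Fin (dv j)) := (Fintype.equivFinOfCardEq hcard).symm
  let V : Fin r → (Σ j : Fin s, Fin (dv j)) → ℂ := fun i κ =>
    ((i : ℕ).descFactorial (κ.2 : ℕ) : ℂ) * x κ.1 ^ ((i : ℕ) - (κ.2 : ℕ))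
  let A : (Σ j : Fin s, Fin (dv j)) → (Σ j : Fin s, Fin (dv j)) → ℂ := fun κ μ =>
    if h : κ.1 = μ.1 ∧ (κ.2 : ℕ) + (μ.2 : ℕ) < dv κ.1 then
      ((((κ.2 : ℕ) + (μ.2 : ℕ)).choose (κ.2 : ℕ) : ℕ) : ℂ) *
        a κ.1 ((κ.2 : ℕ) + (μ.2 : ℕ)) else 0
  let W : Matrix (Fin r) (Fin r) ℂ := Matrix.of fun i n => V i (e n)
  let A' : Matrix (Fin r) (Fin r) ℂ := Matrix.of fun n mm => A (e n) (e mm)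
  -- factorization
  have hAdite : ∀ (j : Fin s) (p q : Fin (dv j)),
      A ⟨j, p⟩ ⟨j, q⟩ = if (p : ℕ) + (q : ℕ) < dv j then
        ((((p : ℕ) + (q : ℕ)).choose (p : ℕ) : ℕ) : ℂ) * a j ((p : ℕ) + (q : ℕ)) else 0 := by
    intro j p q
    by_cases h : (p : ℕ) + (q : ℕ) < dv j
    · rw [if_pos h]; exact dif_pos ⟨rfl, h⟩
    · rw [if_neg h]; exact dif_neg (by tauto)
  have sigma_split : ∀ f : (Σ j : Fin s, Fin (dv j)) → ℂ,
      (∑ κ : Σ j : Fin s, Fin (dv j), f κ) = ∑ j : Fin s, ∑ p : Fin (dv j), f ⟨j, p⟩ := by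
    intro f
    rw [← Finset.univ_sigma_univ, Finset.sum_sigma]
  have hfac : (Matrix.of fun (i j : Fin r) => m ((i : ℕ) + (j : ℕ))) = W * A' * Wᵀ := by
    ext i k
    rw [Matrix.mul_apply]
    simp only [W, A', Matrix.mul_apply, Matrix.transpose_apply, Matrix.of_apply, Finset.sum_mul]
    rw [hm]
    have h1 : ∀ mm : Fin r, (∑ n : Fin r, V i (e n) * A (e n) (e mm) * V k (e mm))
        = ∑ κ : Σ j : Fin s, Fin (dv j), V i κ * A κ (e mm) * V k (e mm) := fun mm =>
      Equiv.sum_comp e (fun κ => V i κ * A κ (e mm) * V k (e mm))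
    rw [Finset.sum_congr rfl (fun mm _ => h1 mm),
      Equiv.sum_comp e (fun μ => ∑ κ : Σ j : Fin s, Fin (dv j), V i κ * A κ μ * V k μ)]
    rw [sigma_split (fun μ => ∑ κ : Σ j : Fin s, Fin (dv j), V i κ * A κ μ * V k μ)]
    refine Finset.sum_congr rfl fun j _ => ?_
    have h2 : ∀ q : Fin (dv j),
        (∑ κ : Σ j' : Fin s, Fin (dv j'), V i κ * A κ ⟨j, q⟩ * V k ⟨j, q⟩)
        = ∑ p : Fin (dv j), V i ⟨j, p⟩ * A ⟨j, p⟩ ⟨j, q⟩ * V k ⟨j, q⟩ := by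
      intro q
      rw [sigma_split (fun κ => V i κ * A κ ⟨j, q⟩ * V k ⟨j, q⟩)]
      rw [Finset.sum_eq_single j]
      · intro j'' _ hne
        refine Finset.sum_eq_zero fun p _ => ?_
        have : A ⟨j'', p⟩ ⟨j, q⟩ = 0 := dif_neg (by simp [hne])
        rw [this, mul_zero, zero_mul]
      · intro h; exact absurd (Finset.mem_univ _) h
    rw [Finset.sum_congr rfl (fun q _ => h2 q)]
    -- now : Σ_{ℓ ∈ range (dv j)} ... = Σ_{q : Fin (dv j)} Σ_{p : Fin (dv j)} ...
    have h3 : ∀ q : Fin (dv j),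
        (∑ p : Fin (dv j), V i ⟨j, p⟩ * A ⟨j, p⟩ ⟨j, q⟩ * V k ⟨j, q⟩)
        = ∑ p ∈ range (dv j),
            (((i : ℕ).descFactorial p : ℂ) * x j ^ ((i : ℕ) - p)) *
              (if p + (q : ℕ) < dv j then
                (((p + (q : ℕ)).choose p : ℕ) : ℂ) * a j (p + (q : ℕ)) else 0) *
              (((k : ℕ).descFactorial (q : ℕ) : ℂ) * x j ^ ((k : ℕ) - (q : ℕ))) := by
      intro q
      rw [← Fin.sum_univ_eq_sum_range (fun p =>
        (((i : ℕ).descFactorial p : ℂ) * x j ^ ((i : ℕ) - p)) *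
          (if p + (q : ℕ) < dv j then
            (((p + (q : ℕ)).choose p : ℕ) : ℂ) * a j (p + (q : ℕ)) else 0) *
          (((k : ℕ).descFactorial (q : ℕ) : ℂ) * x j ^ ((k : ℕ) - (q : ℕ)))) (dv j)]
      exact Finset.sum_congr rfl fun p _ => by rw [hAdite j p q]
    rw [Finset.sum_congr rfl (fun q _ => h3 q)]
    rw [Fin.sum_univ_eq_sum_range (fun q => ∑ p ∈ range (dv j),
        (((i : ℕ).descFactorial p : ℂ) * x j ^ ((i : ℕ) - p)) *
          (if p + q < dv j then
            (((p + q).choose p : ℕ) : ℂ) * a j (p + q) else 0) *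
          (((k : ℕ).descFactorial q : ℂ) * x j ^ ((k : ℕ) - q))) (dv j)]
    exact (block_sum' (dv j) (a j) (x j) (i : ℕ) (k : ℕ)).symm
  -- determinant of W
  have hW : W.det ≠ 0 := by
    rw [Ne, ← Matrix.exists_vecMul_eq_zero_iff]
    rintro ⟨v, hv0, hv⟩
    apply hv0
    apply vandermonde_kernel' x hx dv hdv hsum v
    intro j p hp
    obtain ⟨n, hn⟩ : ∃ n, e n = ⟨j, ⟨p, hp⟩⟩ := ⟨e.symm _, e.apply_symm_apply _⟩
    have h := congrFun hv n
    simp only [Matrix.vecMul, dotProduct, Matrix.of_apply, Pi.zero_apply, W] at h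
    rw [hn] at h
    simp only [V] at h
    simpa [mul_assoc] using h
  -- determinant of A'
  have hA : A'.det ≠ 0 := by
    rw [Ne, ← Matrix.exists_mulVec_eq_zero_iff]
    rintro ⟨c, hc0, hc⟩
    apply hc0
    have hw0 : (fun μ => c (e.symm μ)) = 0 := by
      apply A_kernel' dv hdv a ha
      intro κ
      obtain ⟨n, hn⟩ : ∃ n, e n = κ := ⟨e.symm _, e.apply_symm_apply _⟩
      have h := congrFun hc n
      simp only [Matrix.mulVec, dotProduct, Matrix.of_apply, Pi.zero_apply, A'] at h
      rw [hn] at h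
      rw [← Equiv.sum_comp e (fun μ => A κ μ * c (e.symm μ))]
      simp only [Equiv.symm_apply_apply]
      exact h
    funext n
    have := congrFun hw0 (e n)
    simpa using this
  rw [hfac, Matrix.det_mul, Matrix.det_mul, Matrix.det_transpose]
  exact mul_ne_zero (mul_ne_zero hW hA) hW
end

section
/- Let x_1 ≤ x_2 ≤ ... ≤ x_d be real numbers and a_1, ..., a_d > 0. Then the Vandermonde mapping V(x_1,...,x_d) = (Σ_i a_i x_i, Σ_i a_i x_i², ..., Σ_i a_i x_i^d), restricted to the prism {x_1 ≤ ... ≤ x_d} ⊂ ℝ^d, is injective: if x_1 ≤ ... ≤ x_d and y_1 ≤ ... ≤ y_d satisfy Σ_i a_i x_i^k = Σ_i a_i y_i^k for k = 1,...,d, then x_i = y_i for all i. -/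
/-!
Suppose `x ≠ y` and keep only the indices where `x i ≠ y i`. By monotonicity, two such indices
`i < j` with opposite signs of `x - y` have the interval between `x i` and `y i` to the left of the
one between `x j` and `y j`. Hence a root at each sign change gives a polynomial `P` of degree
`< d` with the sign of `x i - y i` between `x i` and `y i`. An antiderivative `Q` of `P` has
degree `≤ d`, so the power-sum identities give `∑ a i * Q (x i) = ∑ a i * Q (y i)`, whereas the
mean value theorem gives `Q (y i) < Q (x i)` whenever `x i ≠ y i`.
-/

open Finset Polynomial

section OrderedRing

variable {α : Type*} [CommRing α] [LinearOrder α] [IsStrictOrderedRing α]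

theorem max_le_min_of_mul_sub_nonpos {x₀ x₁ y₀ y₁ : α} (hx : x₀ ≤ x₁) (hy : y₀ ≤ y₁)
    (h : (x₀ - y₀) * (x₁ - y₁) ≤ 0) : max x₀ y₀ ≤ min x₁ y₁ := by
  rcases le_total x₀ y₀ with h₀ | h₀ <;> rcases le_total x₁ y₁ with h₁ | h₁ <;>
    simp only [max_eq_left, max_eq_right, min_eq_left, min_eq_right, h₀, h₁] <;> nlinarith

theorem mul_pos_of_mul_pos_of_mul_pos {a b c : α} (hab : 0 < a * b) (hbc : 0 < b * c) :
    0 < a * c := by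
  have : 0 < b * b * (a * c) := by
    linarith [mul_pos hab hbc, show a * b * (b * c) = b * b * (a * c) by ring]
  exact pos_of_mul_pos_right this (mul_self_nonneg b)

/-- The last conjunct is the induction invariant: a root at `min (x 1) (y 1)` is added exactly
when `x 0 - y 0` and `x 1 - y 1` have opposite signs. -/
theorem exists_polynomial_sign_sub_on_uIoo :
    ∀ (n : ℕ) (x y : Fin (n + 1) → α), Monotone x → Monotone y → (∀ i, x i ≠ y i) →
      ∃ P : α[X], P.natDegree ≤ n ∧
        (∀ i, ∀ t ∈ Set.uIoo (x i) (y i), 0 < (x i - y i) * P.eval t) ∧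
        ∀ t < max (x 0) (y 0), 0 < (x 0 - y 0) * P.eval t
  | 0, x, y, _, _, hxy => by
    have hpos : 0 < (x 0 - y 0) * (C (x 0 - y 0)).eval 0 := by
      simpa using mul_self_pos.2 (sub_ne_zero.2 (hxy 0))
    refine ⟨C (x 0 - y 0), by simp, fun i t _ => ?_, fun t _ => by simpa using hpos⟩
    fin_cases i
    simpa using hpos
  | n + 1, x, y, hx, hy, hxy => by
    obtain ⟨P, hdeg, hmid, hleft⟩ :=
      exists_polynomial_sign_sub_on_uIoo n (x ∘ Fin.succ) (y ∘ Fin.succ)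
        (hx.comp Fin.strictMono_succ.monotone) (hy.comp Fin.strictMono_succ.monotone)
        fun i => hxy i.succ
    simp only [Function.comp_apply, Fin.succ_zero_eq_one] at hmid hleft
    have hx₀₁ : x 0 ≤ x 1 := hx (Fin.zero_le 1)
    have hy₀₁ : y 0 ≤ y 1 := hy (Fin.zero_le 1)
    by_cases hsame : 0 < (x 0 - y 0) * (x 1 - y 1)
    · have hhead : ∀ t < max (x 0) (y 0), 0 < (x 0 - y 0) * P.eval t := fun t ht =>
        mul_pos_of_mul_pos_of_mul_pos hsame
          (hleft t (ht.trans_le (max_le_max hx₀₁ hy₀₁)))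
      exact ⟨P, hdeg.trans n.le_succ,
        Fin.cases (fun t ht => hhead t ht.2) hmid, hhead⟩
    · set c := min (x 1) (y 1)
      have hsep : max (x 0) (y 0) ≤ c := max_le_min_of_mul_sub_nonpos hx₀₁ hy₀₁ (not_lt.1 hsame)
      have hopp : 0 < (x 0 - y 0) * -(x 1 - y 1) := by
        rw [mul_neg, neg_pos]
        exact (not_lt.1 hsame).lt_of_ne
          (mul_ne_zero (sub_ne_zero.2 (hxy 0)) (sub_ne_zero.2 (hxy 1)))
      have hhead : ∀ t < max (x 0) (y 0), 0 < (x 0 - y 0) * ((X - C c) * P).eval t := by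
        intro t ht
        have htc : t < c := ht.trans_le hsep
        refine mul_pos_of_mul_pos_of_mul_pos hopp ?_
        convert mul_pos (neg_pos.2 (sub_neg.2 htc)) (hleft t (htc.trans_le min_le_max)) using 1
        simp only [eval_mul, eval_sub, eval_X, eval_C]
        ring
      refine ⟨(X - C c) * P, ?_, Fin.cases (fun t ht => hhead t ht.2) fun i t ht => ?_, hhead⟩
      · exact natDegree_mul_le.trans (by linarith [natDegree_X_sub_C_le c])
      · have hct : c < t :=
          (min_le_min (hx (Fin.succ_pos i)) (hy (Fin.succ_pos i))).trans_lt ht.1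
        rw [eval_mul, eval_sub, eval_X, eval_C, mul_left_comm]
        exact mul_pos (sub_pos.2 hct) (hmid i t ht)

end OrderedRing

theorem Polynomial.exists_derivative_eq {K : Type*} [Field K] [CharZero K] (P : K[X]) :
    ∃ Q : K[X], derivative Q = P ∧ Q.natDegree ≤ P.natDegree + 1 := by
  refine ⟨∑ k ∈ range (P.natDegree + 1), monomial (k + 1) (P.coeff k / (k + 1)),
    ?_, natDegree_sum_le_of_forall_le _ _ fun k hk => ?_⟩
  · conv_rhs => rw [P.as_sum_range' (P.natDegree + 1) (Nat.lt_succ_self _)]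
    simp only [derivative_sum, derivative_monomial, Nat.add_sub_cancel]
    refine sum_congr rfl fun k _ => ?_
    congr 1
    push_cast
    field_simp
  · exact (natDegree_monomial_le _).trans (by simpa using Finset.mem_range.1 hk)

theorem lt_of_pos_mul_deriv_of_mem_uIoo {f : ℝ → ℝ} (hf : Differentiable ℝ f) {x y : ℝ}
    (hxy : x ≠ y) (h : ∀ t ∈ Set.uIoo x y, 0 < (x - y) * deriv f t) : f y < f x := by
  rcases hxy.lt_or_gt with hlt | hlt
  · obtain ⟨c, hc, hslope⟩ := exists_deriv_eq_slope f hlt hf.continuous.continuousOn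
      hf.differentiableOn
    have := h c (Set.Ioo_subset_uIoo hc)
    rw [hslope, ← neg_sub y x, neg_mul, mul_div_cancel₀ _ (sub_ne_zero.2 hlt.ne')] at this
    linarith
  · obtain ⟨c, hc, hslope⟩ := exists_deriv_eq_slope f hlt hf.continuous.continuousOn
      hf.differentiableOn
    have := h c (Set.Ioo_subset_uIoo' hc)
    rw [hslope, mul_div_cancel₀ _ (sub_ne_zero.2 hlt.ne')] at this
    linarith

theorem sum_mul_eval_eq_of_sum_mul_pow_eq {ι R : Type*} [Fintype ι] [CommSemiring R] {d : ℕ}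
    {a x y : ι → R} (h : ∀ k ∈ Icc 1 d, ∑ i, a i * x i ^ k = ∑ i, a i * y i ^ k)
    {q : R[X]} (hq : q.natDegree ≤ d) :
    ∑ i, a i * q.eval (x i) = ∑ i, a i * q.eval (y i) := by
  have hsum : ∀ z : ι → R, ∑ i, a i * q.eval (z i) =
      ∑ k ∈ range (d + 1), q.coeff k * ∑ i, a i * z i ^ k := fun z => by
    simp only [eval_eq_sum_range' (Nat.lt_succ_of_le hq), mul_sum]
    rw [sum_comm]
    exact sum_congr rfl fun _ _ => sum_congr rfl fun _ _ => by ring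
  rw [hsum, hsum]
  refine sum_congr rfl fun k hk => ?_
  rcases k with _ | k
  · simp
  · rw [h (k + 1) (mem_Icc.2 ⟨k.succ_pos, Nat.lt_succ_iff.1 (mem_range.1 hk)⟩)]

/-- Arnold's theorem: the Vandermonde mapping
`(x_1,…,x_d) ↦ (Σ a_i x_i, …, Σ a_i x_i^d)` with fixed positive weights `a_i` is
injective on the prism `x_1 ≤ … ≤ x_d` of `ℝ^d`. -/
theorem vandermonde_map_injective_on_prism (d : ℕ) (a : Fin d → ℝ)
    (ha : ∀ i, 0 < a i) (x y : Fin d → ℝ)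
    (hx : Monotone x) (hy : Monotone y)
    (h : ∀ k ∈ Finset.Icc 1 d, ∑ i, a i * x i ^ k = ∑ i, a i * y i ^ k) :
    x = y := by
  by_contra hne
  set N := univ.filter fun i => x i ≠ y i
  obtain ⟨i₀, hi₀⟩ := Function.ne_iff.1 hne
  have hN : N.Nonempty := ⟨i₀, mem_filter.2 ⟨mem_univ i₀, hi₀⟩⟩
  obtain ⟨n, hn⟩ := Nat.exists_eq_add_one.2 hN.card_pos
  set e := N.orderEmbOfFin hn
  obtain ⟨P, hPdeg, hP, -⟩ := exists_polynomial_sign_sub_on_uIoo n (x ∘ e) (y ∘ e)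
    (hx.comp e.monotone) (hy.comp e.monotone) fun j => (mem_filter.1 (N.orderEmbOfFin_mem hn j)).2
  obtain ⟨Q, rfl, hQdeg⟩ := P.exists_derivative_eq
  have hlt : ∀ i ∈ N, Q.eval (y i) < Q.eval (x i) := by
    intro i hi
    obtain ⟨j, rfl⟩ : i ∈ Set.range e := by rwa [N.range_orderEmbOfFin hn]
    refine lt_of_pos_mul_deriv_of_mem_uIoo Q.differentiable (mem_filter.1 hi).2 fun t ht => ?_
    rw [Polynomial.deriv]; exact hP j t ht
  have hle : ∀ i, Q.eval (y i) ≤ Q.eval (x i) := fun i => by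
    by_cases hi : i ∈ N
    · exact (hlt i hi).le
    · rw [show x i = y i by simpa [N] using hi]
  have hQd : Q.natDegree ≤ d := by
    have := N.card_le_univ
    simp only [Fintype.card_fin] at this
    omega
  refine (sum_lt_sum (fun i _ => mul_le_mul_of_nonneg_left (hle i) (ha i).le) ?_).ne
    (sum_mul_eval_eq_of_sum_mul_pow_eq h hQd).symm
  exact ⟨i₀, mem_univ i₀, mul_lt_mul_of_pos_left (hlt i₀ (mem_filter.2 ⟨mem_univ i₀, hi₀⟩)) (ha i₀)⟩
end

section
/- Suppose complex numbers m_0, ..., m_{2d-1} are Taylor coefficients at infinity of a rational function R = P/Q with deg P < deg Q = r ≤ d and gcd(P,Q)=1 (i.e. R(z) - Σ_{k=0}^{2d-1} m_k z^{-(k+1)} = O(z^{-2d-1})). Then the rank of the d × (d+1) Hankel matrix M̃_d = (m_{i+j})_{0≤i≤d-1, 0≤j≤d} is exactly r. -/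
/-!
Put `M(z) = z ^ (2d) ∑_{k < 2d} m_k z^{-(k+1)}`, a polynomial. The Taylor hypothesis says exactly
that `F = X ^ (2d) P - Q M` has degree `< r`. A vector `v` in the domain of the Hankel matrix is the
coefficient vector of a polynomial `V` of degree `≤ d`, and `(M̃_d v)_i` is the coefficient of
`X ^ (2d - 1 - i)` in `M V`. If `Q ∣ V`, then `M V = X ^ (2d) P (V / Q) - F (V / Q)` has no
coefficients in degrees `[d, 2d)`. Conversely, if those coefficients vanish, write
`M V = X ^ (2d) W + L` with `deg L < d`; then `X ^ (2d) (P V - Q W) = F V + Q L` has degree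
`< r + d ≤ 2d`, so `P V = Q W`, and coprimality gives `Q ∣ V`. Hence the kernel consists of the
multiples of `Q` of degree `≤ d`, of dimension `d + 1 - r`, and the rank is `r`.
-/

open Polynomial Filter Topology Finset Bornology Asymptotics
open scoped Matrix

section Asymptotics
variable {𝕜 : Type*} [NontriviallyNormedField 𝕜]

theorem Polynomial.eventually_eval_ne_zero_cobounded {Q : 𝕜[X]} (hQ : Q ≠ 0) :
    ∀ᶠ z in cobounded 𝕜, Q.eval z ≠ 0 :=
  isBounded_def.mp (finite_setOfPred_isRoot hQ).isBounded

theorem Polynomial.degree_lt_of_tendsto_div_cobounded {F Q : 𝕜[X]} (hQ : Q ≠ 0)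
    (h : Tendsto (fun z => F.eval z / Q.eval z) (cobounded 𝕜) (𝓝 0)) :
    F.degree < Q.degree := by
  by_contra! hle
  have hQ_ne := eventually_eval_ne_zero_cobounded hQ
  have hFQ : (F.eval ·) =o[cobounded 𝕜] (Q.eval ·) :=
    (((isLittleO_one_iff 𝕜).mpr h).mul_isBigO (isBigO_refl (Q.eval ·) _)).congr'
      (hQ_ne.mono fun z hz => div_mul_cancel₀ _ hz) (by simp)
  exact isLittleO_irrefl hQ_ne.frequently ((isBigO_cobounded_of_degree_le hle).trans_isLittleO hFQ)

end Asymptotics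

section MomentPoly

noncomputable def momentPoly {R : Type*} [Semiring R] (m : ℕ → R) (n : ℕ) : R[X] :=
  ∑ k ∈ range n, C (m k) * X ^ (n - 1 - k)

variable {R : Type*} [CommSemiring R] (m : ℕ → R)

theorem coeff_momentPoly {n j : ℕ} (hj : j < n) : (momentPoly m n).coeff j = m (n - 1 - j) := by
  simp only [momentPoly, finsetSum_coeff, coeff_C_mul_X_pow]
  rw [sum_eq_single (n - 1 - j) (fun k hk hne => if_neg (by grind)) (by grind), if_pos (by omega)]

theorem coeff_momentPoly_mul {N s i : ℕ} {V : R[X]} (hV : V.natDegree < s) (hs : i + s ≤ N) :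
    (momentPoly m N * V).coeff (N - 1 - i) = ∑ j ∈ range s, m (i + j) * V.coeff j := by
  conv_lhs => rw [V.as_sum_range' s hV]
  simp only [mul_sum, finsetSum_coeff]
  refine sum_congr rfl fun j hj => ?_
  rw [mem_range] at hj
  rw [← C_mul_X_pow_eq_monomial, mul_left_comm, coeff_C_mul, coeff_mul_X_pow',
    if_pos (by omega), coeff_momentPoly m (by omega), mul_comm]
  congr 2
  omega

theorem eval_momentPoly {K : Type*} [Field K] (m : ℕ → K) {z : K} (hz : z ≠ 0) (n : ℕ) :
    (momentPoly m n).eval z = z ^ n * ∑ k ∈ range n, m k * z⁻¹ ^ (k + 1) := by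
  simp only [momentPoly, eval_finsetSum, eval_mul, eval_C, eval_pow, eval_X, mul_sum]
  refine sum_congr rfl fun k hk => ?_
  rw [mul_left_comm, inv_pow, ← pow_sub₀ _ hz (by grind)]
  congr 2
  omega

theorem degree_X_pow_mul_sub_mul_momentPoly_lt {𝕜 : Type*} [NontriviallyNormedField 𝕜]
    {P Q : 𝕜[X]} (hQ : Q ≠ 0) (m : ℕ → 𝕜) (n : ℕ)
    (h : Tendsto (fun z : 𝕜 => z ^ n * (P.eval z / Q.eval z - ∑ k ∈ range n, m k * z⁻¹ ^ (k + 1)))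
      (cobounded 𝕜) (𝓝 0)) :
    (X ^ n * P - Q * momentPoly m n).degree < Q.degree := by
  refine degree_lt_of_tendsto_div_cobounded hQ (h.congr' ?_)
  filter_upwards [eventually_ne_cobounded 0, eventually_eval_ne_zero_cobounded hQ] with z hz hQz
  rw [eval_sub, eval_mul, eval_mul, eval_pow, eval_X, eval_momentPoly m hz]
  field_simp

end MomentPoly

section Pade
variable {K : Type*} [Field K] {N d : ℕ} {P Q M V : K[X]}

theorem coeff_mul_eq_zero_of_dvd (hF : (X ^ N * P - Q * M).degree < Q.degree)
    (hV : V.degree ≤ d) (hQV : Q ∣ V) {k : ℕ} (hdk : d ≤ k) (hkN : k < N) :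
    (M * V).coeff k = 0 := by
  obtain ⟨U, rfl⟩ := hQV
  rcases eq_or_ne U 0 with rfl | hU
  · simp
  have hFU : ((X ^ N * P - Q * M) * U).degree < (k : WithBot ℕ) := by
    calc _ = (X ^ N * P - Q * M).degree + U.degree := degree_mul
      _ < Q.degree + U.degree := WithBot.add_lt_add_right (degree_ne_bot.mpr hU) hF
      _ = (Q * U).degree := degree_mul.symm
      _ ≤ k := hV.trans (by exact_mod_cast hdk)
  have hMQU : M * (Q * U) = X ^ N * (P * U) - (X ^ N * P - Q * M) * U := by ring
  rw [hMQU, coeff_sub, coeff_X_pow_mul', if_neg (by omega), coeff_eq_zero_of_degree_lt hFU,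
    sub_zero]

theorem dvd_of_coeff_mul_eq_zero (hcop : IsCoprime P Q)
    (hF : (X ^ N * P - Q * M).degree < Q.degree) (hN : Q.natDegree + d ≤ N) (hV : V.degree ≤ d)
    (h : ∀ k, d ≤ k → k < N → (M * V).coeff k = 0) : Q ∣ V := by
  rcases eq_or_ne V 0 with rfl | hV0
  · exact dvd_zero Q
  have hQ : Q.degree = Q.natDegree := degree_eq_natDegree (ne_zero_of_degree_gt hF)
  set F := X ^ N * P - Q * M
  set L := PowerSeries.trunc d ((M * V : K[X]) : PowerSeries K)
  obtain ⟨W, hW⟩ : X ^ N ∣ M * V - L := by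
    refine X_pow_dvd_iff.mpr fun k hk => ?_
    rw [coeff_sub, PowerSeries.coeff_trunc, Polynomial.coeff_coe]
    split_ifs with hkd
    · exact sub_self _
    · rw [h k (by omega) hk, sub_zero]
  have hQdN : Q.degree + d ≤ N := by rw [hQ]; exact_mod_cast hN
  have hG : (F * V + Q * L).degree < N := by
    refine (degree_add_le _ _).trans_lt (max_lt ?_ ?_)
    · calc (F * V).degree = F.degree + V.degree := degree_mul
        _ < Q.degree + d := WithBot.add_lt_add_of_lt_of_le (degree_ne_bot.mpr hV0) hF hV
        _ ≤ N := hQdN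
    · calc (Q * L).degree = Q.degree + L.degree := degree_mul
        _ < Q.degree + d :=
          WithBot.add_lt_add_left (by simp [hQ]) (PowerSeries.degree_trunc_lt _ _)
        _ ≤ N := hQdN
  have hPV : X ^ N * (P * V - Q * W) = F * V + Q * L := by linear_combination Q * hW
  have hG0 : F * V + Q * L = 0 :=
    eq_zero_of_dvd_of_degree_lt (hPV ▸ dvd_mul_right _ _) (by rwa [degree_X_pow])
  rw [hG0, mul_eq_zero, sub_eq_zero] at hPV
  exact hcop.symm.dvd_of_dvd_mul_left ⟨W, hPV.resolve_left (pow_ne_zero _ X_ne_zero)⟩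

end Pade

theorem Polynomial.mem_degreeLT_succ_iff {R : Type*} [Semiring R] {n : ℕ} {f : R[X]} :
    f ∈ degreeLT R (n + 1) ↔ f.natDegree ≤ n := by
  rw [degreeLT_succ_eq_degreeLE, mem_degreeLE, natDegree_le_iff_degree_le]

section Hankel

noncomputable def hankelMatrix {α : Type*} (m : ℕ → α) (d : ℕ) : Matrix (Fin d) (Fin (d + 1)) α :=
  Matrix.of fun i j => m (i + j)

variable {K : Type*} [Field K]

theorem finrank_eq_of_mem_iff_dvd {n : ℕ} {Q : K[X]} (hQ : Q ≠ 0) (hQn : Q.natDegree ≤ n)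
    (W : Submodule K (degreeLT K (n + 1))) (hW : ∀ V, V ∈ W ↔ Q ∣ (V : K[X])) :
    Module.finrank K W = n + 1 - Q.natDegree := by
  let S : degreeLT K (n - Q.natDegree + 1) →ₗ[K] degreeLT K (n + 1) :=
    (LinearMap.mulLeft K Q).restrict fun U hU => mem_degreeLT_succ_iff.mpr <|
      natDegree_mul_le.trans (by have := mem_degreeLT_succ_iff.mp hU; omega)
  have hS : Function.Injective S := fun U U' h =>
    Subtype.ext (mul_left_cancel₀ hQ (congrArg Subtype.val h))
  have hSW : LinearMap.range S = W := by
    ext V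
    rw [hW, LinearMap.mem_range]
    constructor
    · rintro ⟨U, rfl⟩
      exact dvd_mul_right _ _
    · rintro ⟨U, hU⟩
      refine ⟨⟨U, mem_degreeLT_succ_iff.mpr ?_⟩, Subtype.ext hU.symm⟩
      rcases eq_or_ne U 0 with rfl | hU0
      · simp
      have hV := mem_degreeLT_succ_iff.mp V.2
      rw [hU, natDegree_mul hQ hU0] at hV
      omega
  rw [← hSW, LinearMap.finrank_range_of_inj hS, (degreeLTEquiv K _).finrank_eq,
    Module.finrank_fin_fun]
  omega

theorem hankelMatrix_mulVec_eq_zero_iff_dvd {d : ℕ} {P Q : K[X]} (m : ℕ → K)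
    (hcop : IsCoprime P Q) (hF : (X ^ (2 * d) * P - Q * momentPoly m (2 * d)).degree < Q.degree)
    (hQd : Q.natDegree ≤ d) (V : degreeLT K (d + 1)) :
    hankelMatrix m d *ᵥ degreeLTEquiv K (d + 1) V = 0 ↔ Q ∣ (V : K[X]) := by
  have hV := mem_degreeLT_succ_iff.mp V.2
  have hVdeg : (V : K[X]).degree ≤ d := degree_le_of_natDegree_le hV
  have hcoeff : ∀ i : Fin d, (hankelMatrix m d *ᵥ degreeLTEquiv K (d + 1) V) i =
      (momentPoly m (2 * d) * V).coeff (2 * d - 1 - i) := by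
    intro i
    rw [coeff_momentPoly_mul m (Nat.lt_succ_of_le hV) (by omega)]
    simp only [hankelMatrix, Matrix.mulVec, dotProduct, Matrix.of_apply, degreeLTEquiv]
    exact Fin.sum_univ_eq_sum_range (fun j => m (i + j) * (V : K[X]).coeff j) (d + 1)
  constructor
  · intro h
    refine dvd_of_coeff_mul_eq_zero hcop hF (by omega) hVdeg fun k hdk hk => ?_
    have hk' := congrFun h ⟨2 * d - 1 - k, by omega⟩
    rw [hcoeff, Pi.zero_apply] at hk'
    convert hk' using 2
    simp only
    omega
  · intro h
    funext i
    rw [hcoeff]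
    exact coeff_mul_eq_zero_of_dvd hF hVdeg h (by omega) (by omega)

theorem rank_hankelMatrix_eq_natDegree {d : ℕ} {P Q : K[X]} (m : ℕ → K) (hcop : IsCoprime P Q)
    (hF : (X ^ (2 * d) * P - Q * momentPoly m (2 * d)).degree < Q.degree)
    (hQd : Q.natDegree ≤ d) :
    (hankelMatrix m d).rank = Q.natDegree := by
  let T := (hankelMatrix m d).mulVecLin ∘ₗ (degreeLTEquiv K (d + 1)).toLinearMap
  have hrange : LinearMap.range T = LinearMap.range (hankelMatrix m d).mulVecLin :=
    LinearMap.range_comp_of_range_eq_top _ (LinearEquiv.range _)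
  have hker : Module.finrank K (LinearMap.ker T) = d + 1 - Q.natDegree :=
    finrank_eq_of_mem_iff_dvd (ne_zero_of_degree_gt hF) hQd _ fun V =>
      LinearMap.mem_ker.trans (hankelMatrix_mulVec_eq_zero_iff_dvd m hcop hF hQd V)
  have hT := LinearMap.finrank_range_add_finrank_ker T
  rw [hrange, hker, (degreeLTEquiv K _).finrank_eq, Module.finrank_fin_fun] at hT
  rw [Matrix.rank]
  omega

end Hankel

theorem hankel_rank_eq_of_rational_general (d r : ℕ) (hrd : r ≤ d) (P Q : Polynomial ℂ)
    (hQ : Q ≠ 0) (hQdeg : Q.natDegree = r)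
    (hcop : IsCoprime P Q) (m : ℕ → ℂ)
    (htaylor : Tendsto
      (fun z : ℂ => z ^ (2 * d) *
        (P.eval z / Q.eval z - ∑ k ∈ Finset.range (2 * d), m k * (z⁻¹) ^ (k + 1)))
      (Bornology.cobounded ℂ) (𝓝 0)) :
    (Matrix.of fun (i : Fin d) (j : Fin (d + 1)) => m ((i : ℕ) + (j : ℕ))).rank = r := by
  subst hQdeg
  exact rank_hankelMatrix_eq_natDegree m hcop
    (degree_X_pow_mul_sub_mul_momentPoly_lt hQ m (2 * d) htaylor) hrd

/-- If `m_0,…,m_{2d-1}` are the Taylor coefficients at infinity of an irreducible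
rational fraction `P/Q` with `deg P < deg Q = r ≤ d` (i.e.
`P/Q - Σ_{k<2d} m_k z^{-(k+1)} = O(z^{-2d-1})`), then the `d × (d+1)` Hankel
matrix `(m_{i+j})` has rank exactly `r`. -/
theorem hankel_rank_eq_of_rational (d r : ℕ) (hrd : r ≤ d) (P Q : Polynomial ℂ)
    (hQ : Q ≠ 0) (hQdeg : Q.natDegree = r) (hdeg : P.degree < Q.degree)
    (hcop : IsCoprime P Q) (m : ℕ → ℂ)
    (htaylor : Tendsto
      (fun z : ℂ => z ^ (2 * d) *
        (P.eval z / Q.eval z - ∑ k ∈ Finset.range (2 * d), m k * (z⁻¹) ^ (k + 1)))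
      (Bornology.cobounded ℂ) (𝓝 0)) :
    (Matrix.of fun (i : Fin d) (j : Fin (d + 1)) => m ((i : ℕ) + (j : ℕ))).rank = r :=
  hankel_rank_eq_of_rational_general d r hrd P Q hQ hQdeg hcop m htaylor
end
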